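/- arXiv:2008.04029 — 12 statements merged into one kernel-verified Lean document; each statement's English description precedes it below -/
import Mathlib

section
/- Let K be a field, V a K-vector space, B : V × V → K a bilinear form, ψ an endomorphism of V that is skew-adjoint with respect to B, and c ∈ K a scalar with ψ³ = c • ψ. Let F ⊆ V be a subspace such that B(v, w) = 0, B(v, ψ w) = 0, and B(v, ψ² w) = 0 for all v, w ∈ F. Then the subspace W = F + ψ(F) + ψ²(F) is ψ-stable and totally isotropic for B. -/
/-- If `ψ` is skew-adjoint for a bilinear form `B`, satisfies `ψ³ = c • ψ`, and `F` is a
subspace with `B(F, F) = B(F, ψ F) = B(F, ψ² F) = 0`, then `W = F + ψ(F) + ψ²(F)` is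
`ψ`-stable and totally isotropic. -/
theorem span_isotropic_stable_of_cube_smul
    {K V : Type*} [Field K] [AddCommGroup V] [Module K V]
    (B : V →ₗ[K] V →ₗ[K] K) (ψ : Module.End K V)
    (hskew : ∀ v w : V, B (ψ v) w = - B v (ψ w))
    (c : K) (hψ : ψ ^ 3 = c • ψ)
    (F : Submodule K V)
    (h0 : ∀ v ∈ F, ∀ w ∈ F, B v w = 0)
    (h1 : ∀ v ∈ F, ∀ w ∈ F, B v (ψ w) = 0)
    (h2 : ∀ v ∈ F, ∀ w ∈ F, B v (ψ (ψ w)) = 0) :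
    Submodule.map ψ (F ⊔ Submodule.map ψ F ⊔ Submodule.map (ψ ∘ₗ ψ) F) ≤
        F ⊔ Submodule.map ψ F ⊔ Submodule.map (ψ ∘ₗ ψ) F ∧
      ∀ u ∈ F ⊔ Submodule.map ψ F ⊔ Submodule.map (ψ ∘ₗ ψ) F,
        ∀ u' ∈ F ⊔ Submodule.map ψ F ⊔ Submodule.map (ψ ∘ₗ ψ) F, B u u' = 0 := by
  have hpt : ∀ x : V, ψ (ψ (ψ x)) = c • ψ x := by
    intro x
    have := LinearMap.congr_fun hψ x
    simpa [pow_succ, Module.End.mul_apply] using this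
  -- B(v, ψ³ w) = 0 and B(v, ψ⁴ w) = 0 for v, w ∈ F
  have h3 : ∀ v ∈ F, ∀ w ∈ F, B v (ψ (ψ (ψ w))) = 0 := by
    intro v hv w hw
    rw [hpt, map_smul, h1 v hv w hw, smul_zero]
  have h4 : ∀ v ∈ F, ∀ w ∈ F, B v (ψ (ψ (ψ (ψ w)))) = 0 := by
    intro v hv w hw
    rw [hpt (ψ w), map_smul, h2 v hv w hw, smul_zero]
  constructor
  · rw [Submodule.map_sup, Submodule.map_sup]
    refine sup_le (sup_le ?_ ?_) ?_
    · exact le_sup_of_le_left le_sup_right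
    · rw [← Submodule.map_comp]
      exact le_sup_right
    · rintro x ⟨y, ⟨z, hz, rfl⟩, rfl⟩
      have : ψ ((ψ ∘ₗ ψ) z) = c • ψ z := by
        simpa [LinearMap.comp_apply] using hpt z
      rw [this]
      exact Submodule.smul_mem _ _
        (Submodule.mem_sup_left (Submodule.mem_sup_right (Submodule.mem_map_of_mem hz)))
  · intro u hu u' hu'
    obtain ⟨y, hy, z, hz, rfl⟩ := Submodule.mem_sup.1 hu
    obtain ⟨f, hf, g', hg', rfl⟩ := Submodule.mem_sup.1 hy
    obtain ⟨g, hg, rfl⟩ := hg'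
    obtain ⟨h, hh, rfl⟩ := hz
    obtain ⟨y', hy', z', hz', rfl⟩ := Submodule.mem_sup.1 hu'
    obtain ⟨f', hf', g'', hg'', rfl⟩ := Submodule.mem_sup.1 hy'
    obtain ⟨g2, hg2, rfl⟩ := hg''
    obtain ⟨h2', hh2, rfl⟩ := hz'
    simp only [LinearMap.comp_apply, map_add, LinearMap.add_apply]
    -- skew-adjoint transfers
    have s1 : ∀ a b : V, B (ψ a) b = - B a (ψ b) := hskew
    have s2 : ∀ a b : V, B (ψ (ψ a)) b = B a (ψ (ψ b)) := by
      intro a b; rw [s1, s1, neg_neg]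
    rw [h0 f hf f' hf', h1 f hf g2 hg2, h2 f hf h2' hh2,
      s1 g f', s1 g (ψ g2), s1 g (ψ (ψ h2')),
      s2 h f', s2 h (ψ g2), s2 h (ψ (ψ h2')),
      h1 g hg f' hf', h2 g hg g2 hg2, h3 g hg h2' hh2,
      h2 h hh f' hf', h3 h hh g2 hg2, h4 h hh h2' hh2]
    simp
end

section
/- Let K be a field, V a K-vector space, B : V × V → K a bilinear form, ψ an endomorphism of V that is skew-adjoint with respect to B, and c ∈ K a scalar with ψ² = c • id_V. Let F ⊆ V be a subspace such that B(v, w) = 0 and B(v, ψ w) = 0 for all v, w ∈ F. Then the subspace F + ψ(F) is ψ-stable and totally isotropic for B. -/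
/-- If `ψ` is skew-adjoint for a bilinear form `B`, satisfies `ψ² = c • id`, and `F` is a
subspace with `B(F, F) = B(F, ψ F) = 0`, then `F + ψ(F)` is `ψ`-stable and totally
isotropic. -/
theorem span_isotropic_stable_of_sq_smul_id
    {K V : Type*} [Field K] [AddCommGroup V] [Module K V]
    (B : V →ₗ[K] V →ₗ[K] K) (ψ : Module.End K V)
    (hskew : ∀ v w : V, B (ψ v) w = - B v (ψ w))
    (c : K) (hψ : ψ ^ 2 = c • (1 : Module.End K V))
    (F : Submodule K V)
    (h0 : ∀ v ∈ F, ∀ w ∈ F, B v w = 0)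
    (h1 : ∀ v ∈ F, ∀ w ∈ F, B v (ψ w) = 0) :
    Submodule.map ψ (F ⊔ Submodule.map ψ F) ≤ F ⊔ Submodule.map ψ F ∧
      ∀ u ∈ F ⊔ Submodule.map ψ F, ∀ u' ∈ F ⊔ Submodule.map ψ F, B u u' = 0 := by
  have hψ2 : ∀ w : V, ψ (ψ w) = c • w := by
    intro w
    have := congrArg (fun f : Module.End K V => f w) hψ
    simpa [pow_two, Module.End.mul_apply] using this
  constructor
  · rw [Submodule.map_sup]
    apply sup_le
    · exact le_sup_of_le_right le_rfl
    · refine le_sup_of_le_left ?_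
      intro x hx
      obtain ⟨z, hz, rfl⟩ := hx
      obtain ⟨y, hy, rfl⟩ := hz
      simpa [LinearMap.comp_apply, hψ2 y] using F.smul_mem c hy
  · intro u hu u' hu'
    obtain ⟨v, hv, w, hw, rfl⟩ := Submodule.mem_sup.mp hu
    obtain ⟨v', hv', w', hw', rfl⟩ := Submodule.mem_sup.mp hu'
    obtain ⟨a, ha, rfl⟩ := hw
    obtain ⟨a', ha', rfl⟩ := hw'
    have h2 : B (ψ a) v' = 0 := by rw [hskew]; simp [h1 a ha v' hv']
    have h3 : B (ψ a) (ψ a') = 0 := by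
      rw [hskew, hψ2]
      simp [h0 a ha a' ha']
    simp [map_add, h0 v hv v' hv', h1 v hv a' ha', h2, h3]
end

section
/- Let K be a field of characteristic different from 2, V a finite-dimensional K-vector space, B : V × V → K a symmetric bilinear form, and ψ an endomorphism of V that is skew-adjoint with respect to B. Let F' ⊆ F be subspaces of V with dim F ≤ dim F' + 1. If B(v, ψ w) = 0 for all v ∈ F' and all w ∈ F, then B(v, ψ w) = 0 for all v, w ∈ F. -/
/-- For a symmetric bilinear form `B` in characteristic `≠ 2` and a skew-adjoint
endomorphism `ψ`, if `F' ⊆ F` with `dim F ≤ dim F' + 1` and `B(F', ψ F) = 0`, then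
`B(F, ψ F) = 0`. -/
theorem bilin_skew_vanish_extend_codim_one
    {K V : Type*} [Field K] [AddCommGroup V] [Module K V] [FiniteDimensional K V]
    (hchar : (2 : K) ≠ 0)
    (B : V →ₗ[K] V →ₗ[K] K) (hsymm : ∀ v w : V, B v w = B w v)
    (ψ : Module.End K V) (hskew : ∀ v w : V, B (ψ v) w = - B v (ψ w))
    (F' F : Submodule K V) (hFF : F' ≤ F)
    (hdim : Module.finrank K F ≤ Module.finrank K F' + 1)
    (h : ∀ v ∈ F', ∀ w ∈ F, B v (ψ w) = 0) :
    ∀ v ∈ F, ∀ w ∈ F, B v (ψ w) = 0 := by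
  rcases eq_or_lt_of_le hFF with rfl | hlt
  · exact h
  · obtain ⟨u, huF, huF'⟩ := SetLike.exists_of_lt hlt
    set G := F' ⊔ Submodule.span K {u} with hG
    have hGF : G ≤ F := sup_le hFF ((Submodule.span_singleton_le_iff_mem u F).2 huF)
    have hlt' : F' < G := lt_of_le_of_ne le_sup_left (by
      intro hEq
      exact huF' (hEq ▸ (le_sup_right : _ ≤ F' ⊔ Submodule.span K {u}) (Submodule.mem_span_singleton_self u)))
    have hGrank : Module.finrank K F' < Module.finrank K G :=
      Submodule.finrank_lt_finrank_of_lt hlt'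
    have hFG : F = G := (Submodule.eq_of_le_of_finrank_le hGF (by omega)).symm
    -- key facts
    have key1 : ∀ w ∈ F', B u (ψ w) = 0 := by
      intro w hw
      have := hskew w u
      have h2 : B w (ψ u) = 0 := h w hw u huF
      have h3 : B (ψ w) u = B u (ψ w) := hsymm (ψ w) u
      rw [h3, h2] at this
      simpa using this
    have key2 : B u (ψ u) = 0 := by
      have := hskew u u
      rw [hsymm (ψ u) u] at this
      have h2 : (2 : K) * B u (ψ u) = 0 := by linear_combination this
      exact (mul_eq_zero.1 h2).resolve_left hchar
    intro v hv w hw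
    rw [hFG] at hv hw
    obtain ⟨v', hv', y, hy, rfl⟩ := Submodule.mem_sup.1 hv
    obtain ⟨w', hw', z, hz, rfl⟩ := Submodule.mem_sup.1 hw
    obtain ⟨a, rfl⟩ := Submodule.mem_span_singleton.1 hy
    obtain ⟨b, rfl⟩ := Submodule.mem_span_singleton.1 hz
    have hwF : w' + b • u ∈ F := hFG ▸ hw
    have h1 : B v' (ψ (w' + b • u)) = 0 := h v' hv' _ hwF
    have h2 : B u (ψ w') = 0 := key1 w' hw'
    simp only [map_add, map_smul, LinearMap.add_apply, LinearMap.smul_apply,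
      smul_eq_mul] at h1 ⊢
    linear_combination h1 + a * h2 + a * b * key2
end

section
/- Let K be a field of characteristic different from 2, V a finite-dimensional K-vector space, B : V × V → K a nondegenerate symmetric bilinear form, and ψ an endomorphism of V that is skew-adjoint with respect to B. Let x ∈ K be nonzero, and suppose V is the internal direct sum of the eigenspaces V_x, V_0, V_{−x} of ψ for the eigenvalues x, 0, −x, with dim V_x = dim V_{−x} = 1. If v ∈ V satisfies B(ψ v, ψ v) = 0, then the subspace spanned by v and ψ v is ψ-stable. -/
/-- Type B case (4)(i): for a nondegenerate symmetric bilinear space `(V, B)` in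
characteristic `≠ 2` with skew-adjoint `ψ` whose eigenspaces for `x, 0, -x` span `V`
(with the `±x`-eigenspaces one-dimensional), any `v` with `B(ψ v, ψ v) = 0` generates a
`ψ`-stable subspace `span{v, ψ v}`. -/
theorem span_self_psi_stable_of_isotropic_image
    {K V : Type*} [Field K] [AddCommGroup V] [Module K V] [FiniteDimensional K V]
    (hchar : (2 : K) ≠ 0)
    (B : V →ₗ[K] V →ₗ[K] K)
    (hsymm : ∀ v w : V, B v w = B w v)
    (hnd : ∀ v : V, (∀ w : V, B v w = 0) → v = 0)
    (ψ : Module.End K V) (hskew : ∀ v w : V, B (ψ v) w = - B v (ψ w))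
    (x : K) (hx : x ≠ 0)
    (hsum : Module.End.eigenspace ψ x ⊔ Module.End.eigenspace ψ 0 ⊔
      Module.End.eigenspace ψ (-x) = ⊤)
    (hdx : Module.finrank K (Module.End.eigenspace ψ x) = 1)
    (hdnx : Module.finrank K (Module.End.eigenspace ψ (-x)) = 1)
    (v : V) (hv : B (ψ v) (ψ v) = 0) :
    Submodule.map ψ (Submodule.span K {v, ψ v}) ≤ Submodule.span K {v, ψ v} := by
  -- orthogonality of eigenvectors whose eigenvalues do not sum to zero
  have horth : ∀ (p q : V) (lam mu : K), ψ p = lam • p → ψ q = mu • q →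
      lam + mu ≠ 0 → B p q = 0 := by
    intro p q lam mu hp hq hlm
    have h := hskew p q
    rw [hp, hq, map_smul, map_smul] at h
    simp only [LinearMap.smul_apply, smul_eq_mul] at h
    have : (lam + mu) * B p q = 0 := by linear_combination h
    rcases mul_eq_zero.mp this with h' | h'
    · exact absurd h' hlm
    · exact h'
  -- decompose v
  have hmem : v ∈ (⊤ : Submodule K V) := trivial
  rw [← hsum] at hmem
  obtain ⟨u, hu, c, hc, hvdef⟩ := Submodule.mem_sup.mp hmem
  obtain ⟨a, ha, b, hb, hudef⟩ := Submodule.mem_sup.mp hu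
  have ha' : ψ a = x • a := Module.End.mem_eigenspace_iff.mp ha
  have hb' : ψ b = (0 : K) • b := Module.End.mem_eigenspace_iff.mp hb
  have hc' : ψ c = (-x) • c := Module.End.mem_eigenspace_iff.mp hc
  have hb0 : ψ b = 0 := by rw [hb', zero_smul]
  have hvabc : v = a + b + c := by rw [← hvdef, ← hudef]
  have hpsi : ψ v = x • a + (-x) • c := by
    rw [hvabc, map_add, map_add, ha', hb0, hc']; abel
  have hpsi2 : ψ (ψ v) = (x * x) • a + (x * x) • c := by
    rw [hpsi, map_add, map_smul, map_smul, ha', hc', smul_smul, smul_smul]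
    ring_nf
  have haa : B a a = 0 := horth a a x x ha' ha' (by
    intro h; apply hx
    have h2 : (2:K) * x = 0 := by linear_combination h
    rcases mul_eq_zero.mp h2 with h'|h'
    · exact absurd h' hchar
    · exact h')
  have hcc : B c c = 0 := horth c c (-x) (-x) hc' hc' (by
    intro h; apply hx; have : (2:K) * x = 0 := by linear_combination -h
    rcases mul_eq_zero.mp this with h|h
    · exact absurd h hchar
    · exact h)
  -- from the isotropy hypothesis, B a c = 0
  have hac : B a c = 0 := by
    have hexp : B (ψ v) (ψ v) = -(2 * (x * x)) * B a c := by
      rw [hpsi]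
      simp only [map_add, map_smul, LinearMap.add_apply, LinearMap.smul_apply,
        smul_eq_mul]
      rw [haa, hcc, hsymm c a]
      ring
    rw [hexp] at hv
    rcases mul_eq_zero.mp hv with h | h
    · exfalso
      have h2 : (2:K) * (x*x) = 0 := by linear_combination -h
      rcases mul_eq_zero.mp h2 with h'|h'
      · exact hchar h'
      · rcases mul_eq_zero.mp h' with h''|h'' <;> exact hx h''
    · exact h
  -- a = 0 or c = 0
  have hkey : a = 0 ∨ c = 0 := by
    by_contra hcon
    push_neg at hcon
    obtain ⟨ha0, hc0⟩ := hcon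
    -- c spans the (-x)-eigenspace
    have hcne : (⟨c, hc⟩ : Module.End.eigenspace ψ (-x)) ≠ 0 := by
      intro h; exact hc0 (congrArg Subtype.val h)
    have hspan := (finrank_eq_one_iff_of_nonzero' (⟨c, hc⟩ :
      Module.End.eigenspace ψ (-x)) hcne).mp hdnx
    -- B a · vanishes everywhere
    have : a = 0 := by
      apply hnd
      intro w
      have hwmem : w ∈ (⊤ : Submodule K V) := trivial
      rw [← hsum] at hwmem
      obtain ⟨u', hu', c', hc'', hwdef⟩ := Submodule.mem_sup.mp hwmem
      obtain ⟨a', ha'', b', hb'', hudef'⟩ := Submodule.mem_sup.mp hu'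
      have haa' : B a a' = 0 := horth a a' x x ha'
        (Module.End.mem_eigenspace_iff.mp ha'') (by
          intro h; apply hx
          have : (2:K) * x = 0 := by linear_combination h
          rcases mul_eq_zero.mp this with h'|h'
          · exact absurd h' hchar
          · exact h')
      have hab' : B a b' = 0 := horth a b' x 0 ha'
        (Module.End.mem_eigenspace_iff.mp hb'') (by simpa using hx)
      have hacc : B a c' = 0 := by
        obtain ⟨t, ht⟩ := hspan ⟨c', hc''⟩
        have : t • c = c' := congrArg Subtype.val ht
        rw [← this, map_smul, smul_eq_mul, hac, mul_zero]
      rw [← hwdef, ← hudef', map_add, map_add, haa', hab', hacc]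
      ring
    exact ha0 this
  -- conclude: ψ (ψ v) is a multiple of ψ v
  have hsq : ψ (ψ v) = x • ψ v ∨ ψ (ψ v) = (-x) • ψ v := by
    rcases hkey with h | h
    · right
      rw [hpsi2, hpsi, h]
      simp [smul_smul]
    · left
      rw [hpsi2, hpsi, h]
      simp [smul_smul]
  rw [Submodule.map_span_le]
  intro m hm
  have h1 : ψ v ∈ Submodule.span K {v, ψ v} :=
    Submodule.subset_span (Set.mem_insert_iff.mpr (Or.inr rfl))
  rcases hm with rfl | rfl
  · exact h1
  · rcases hsq with h | h
    · rw [h]; exact Submodule.smul_mem _ _ h1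
    · rw [h]; exact Submodule.smul_mem _ _ h1
end

section
/- Let K be a field, V a finite-dimensional K-vector space, and ψ an endomorphism of V such that V is the internal direct sum of the eigenspaces V_x, V_y, V_z of ψ for three pairwise distinct eigenvalues x, y, z ∈ K, with dim V_z = 1. Let F₁ ⊆ F₂ be subspaces of V with dim F₁ = 1 and dim F₂ = 2. Then F₁ + ψ(F₁) is ψ-stable, or F₂ + ψ(F₂) + ψ²(F₁) is ψ-stable. -/
/-- Type A case (3): if `ψ` has three distinct eigenvalues `x, y, z` whose eigenspaces
span `V`, with the `z`-eigenspace one-dimensional, and `F₁ ⊆ F₂` have dimensions `1, 2`,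
then `F₁ + ψ(F₁)` is `ψ`-stable or `F₂ + ψ(F₂) + ψ²(F₁)` is `ψ`-stable. -/
theorem stable_refinement_three_eigenvalues
    {K V : Type*} [Field K] [AddCommGroup V] [Module K V] [FiniteDimensional K V]
    (ψ : Module.End K V) (x y z : K) (hxy : x ≠ y) (hxz : x ≠ z) (hyz : y ≠ z)
    (hsum : Module.End.eigenspace ψ x ⊔ Module.End.eigenspace ψ y ⊔
      Module.End.eigenspace ψ z = ⊤)
    (hz : Module.finrank K (Module.End.eigenspace ψ z) = 1)
    (F₁ F₂ : Submodule K V) (h12 : F₁ ≤ F₂)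
    (hd1 : Module.finrank K F₁ = 1) (hd2 : Module.finrank K F₂ = 2) :
    Submodule.map ψ (F₁ ⊔ Submodule.map ψ F₁) ≤ F₁ ⊔ Submodule.map ψ F₁ ∨
    Submodule.map ψ (F₂ ⊔ Submodule.map ψ F₂ ⊔ Submodule.map (ψ ∘ₗ ψ) F₁) ≤
      F₂ ⊔ Submodule.map ψ F₂ ⊔ Submodule.map (ψ ∘ₗ ψ) F₁ := by
  classical
  obtain ⟨v, hvF₁, hv0⟩ : ∃ v ∈ F₁, v ≠ (0 : V) := by
    rw [← Submodule.ne_bot_iff]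
    intro h
    rw [h, finrank_bot] at hd1
    omega
  have hF₁ : F₁ = Submodule.span K {v} := by
    refine (Submodule.eq_of_le_of_finrank_le ?_ ?_).symm
    · rwa [Submodule.span_singleton_le_iff_mem]
    · rw [hd1, finrank_span_singleton hv0]
  have decomp : ∀ w : V, ∃ a b c : V, ψ a = x • a ∧ ψ b = y • b ∧
      c ∈ Module.End.eigenspace ψ z ∧ w = a + b + c := by
    intro w
    have hw : w ∈ (⊤ : Submodule K V) := trivial
    rw [← hsum] at hw
    obtain ⟨ab, hab, c, hc, rfl⟩ := Submodule.mem_sup.mp hw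
    obtain ⟨a, ha, b, hb, rfl⟩ := Submodule.mem_sup.mp hab
    exact ⟨a, b, c, Module.End.mem_eigenspace_iff.mp ha,
      Module.End.mem_eigenspace_iff.mp hb, hc, rfl⟩
  obtain ⟨a, b, c, ha, hb, hcmem, hvabc⟩ := decomp v
  have hc : ψ c = z • c := Module.End.mem_eigenspace_iff.mp hcmem
  by_cases hczero : c = 0
  · -- F₁ ⊔ ψ F₁ is stable
    left
    set W := F₁ ⊔ Submodule.map ψ F₁ with hW
    have hvW : v ∈ W := Submodule.mem_sup_left hvF₁
    have hψvW : ψ v ∈ W := Submodule.mem_sup_right (Submodule.mem_map_of_mem hvF₁)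
    have hv' : v = a + b := by rw [hvabc, hczero, add_zero]
    have hψv : ψ v = x • a + y • b := by rw [hv', map_add, ha, hb]
    have haW : a ∈ W := by
      have h1 : ψ v - y • v = (x - y) • a := by rw [hψv, hv']; module
      have h2 : a = (x - y)⁻¹ • (ψ v - y • v) := by
        rw [h1, smul_smul, inv_mul_cancel₀ (sub_ne_zero.mpr hxy), one_smul]
      rw [h2]
      exact W.smul_mem _ (W.sub_mem hψvW (W.smul_mem _ hvW))
    have hbW : b ∈ W := by
      have : b = v - a := by rw [hv']; abel
      rw [this]; exact W.sub_mem hvW haW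
    have hψψv : ψ (ψ v) ∈ W := by
      have : ψ (ψ v) = (x * x) • a + (y * y) • b := by
        rw [hψv, map_add, map_smul, map_smul, ha, hb, smul_smul, smul_smul]
      rw [this]
      exact W.add_mem (W.smul_mem _ haW) (W.smul_mem _ hbW)
    rw [hW, Submodule.map_sup]
    refine sup_le le_sup_right ?_
    rw [← Submodule.map_comp, Submodule.map_le_iff_le_comap]
    intro w hw
    rw [hF₁, Submodule.mem_span_singleton] at hw
    obtain ⟨t, rfl⟩ := hw
    simp only [Submodule.mem_comap, LinearMap.comp_apply, map_smul]
    exact W.smul_mem t hψψv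
  · -- F₂ ⊔ ψ F₂ ⊔ ψ² F₁ is stable
    right
    set W := F₂ ⊔ Submodule.map ψ F₂ ⊔ Submodule.map (ψ ∘ₗ ψ) F₁ with hW
    have hvF₂ : v ∈ F₂ := h12 hvF₁
    have hvW : v ∈ W := Submodule.mem_sup_left (Submodule.mem_sup_left hvF₂)
    have hψvW : ψ v ∈ W :=
      Submodule.mem_sup_left (Submodule.mem_sup_right (Submodule.mem_map_of_mem hvF₂))
    have hψψvW : ψ (ψ v) ∈ W :=
      Submodule.mem_sup_right (Submodule.mem_map_of_mem hvF₁)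
    have hψv : ψ v = x • a + y • b + z • c := by
      rw [hvabc, map_add, map_add, ha, hb, hc]
    have hψψv : ψ (ψ v) = (x * x) • a + (y * y) • b + (z * z) • c := by
      rw [hψv, map_add, map_add, map_smul, map_smul, map_smul, ha, hb, hc,
        smul_smul, smul_smul, smul_smul]
    have hcW : c ∈ W := by
      have hne : (z - x) * (z - y) ≠ 0 :=
        mul_ne_zero (sub_ne_zero.mpr (Ne.symm hxz)) (sub_ne_zero.mpr (Ne.symm hyz))
      have heq : ψ (ψ v) - (x + y) • ψ v + (x * y) • v = ((z - x) * (z - y)) • c := by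
        rw [hψψv, hψv, hvabc]; module
      have h2 : c = ((z - x) * (z - y))⁻¹ • (ψ (ψ v) - (x + y) • ψ v + (x * y) • v) := by
        rw [heq, smul_smul, inv_mul_cancel₀ hne, one_smul]
      rw [h2]
      exact W.smul_mem _ (W.add_mem (W.sub_mem hψψvW (W.smul_mem _ hψvW)) (W.smul_mem _ hvW))
    have hVz : Module.End.eigenspace ψ z = Submodule.span K {c} := by
      symm
      apply Submodule.eq_of_le_of_finrank_le
      · rwa [Submodule.span_singleton_le_iff_mem]
      · rw [hz, finrank_span_singleton hczero]
    have hcomp : ∀ w ∈ F₂, ∃ a' b' c' : V, ψ a' = x • a' ∧ ψ b' = y • b' ∧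
        ψ c' = z • c' ∧ w = a' + b' + c' ∧ a' ∈ W ∧ b' ∈ W ∧ c' ∈ W := by
      intro w hw
      obtain ⟨a', b', c', ea, eb, hc'mem, hwd⟩ := decomp w
      have ec : ψ c' = z • c' := Module.End.mem_eigenspace_iff.mp hc'mem
      have hc'W : c' ∈ W := by
        have h1 : c' ∈ Submodule.span K {c} := hVz ▸ hc'mem
        rw [Submodule.mem_span_singleton] at h1
        obtain ⟨t, ht⟩ := h1
        rw [← ht]; exact W.smul_mem t hcW
      have hwW : w ∈ W := Submodule.mem_sup_left (Submodule.mem_sup_left hw)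
      have hψwW : ψ w ∈ W :=
        Submodule.mem_sup_left (Submodule.mem_sup_right (Submodule.mem_map_of_mem hw))
      have hu1 : a' + b' ∈ W := by
        have : a' + b' = w - c' := by rw [hwd]; abel
        rw [this]; exact W.sub_mem hwW hc'W
      have hu2 : x • a' + y • b' ∈ W := by
        have : x • a' + y • b' = ψ w - z • c' := by
          rw [hwd, map_add, map_add, ea, eb, ec]; abel
        rw [this]; exact W.sub_mem hψwW (W.smul_mem _ hc'W)
      have ha'W : a' ∈ W := by
        have h3 : a' = (x - y)⁻¹ • ((x • a' + y • b') - y • (a' + b')) := by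
          have h4 : (x • a' + y • b') - y • (a' + b') = (x - y) • a' := by module
          rw [h4, smul_smul, inv_mul_cancel₀ (sub_ne_zero.mpr hxy), one_smul]
        rw [h3]
        exact W.smul_mem _ (W.sub_mem hu2 (W.smul_mem _ hu1))
      have hb'W : b' ∈ W := by
        have : b' = (a' + b') - a' := by abel
        rw [this]; exact W.sub_mem hu1 ha'W
      exact ⟨a', b', c', ea, eb, ec, hwd, ha'W, hb'W, hc'W⟩
    have hsq : ∀ w ∈ F₂, ψ (ψ w) ∈ W := by
      intro w hw
      obtain ⟨a', b', c', ea, eb, ec, hwd, haW, hbW, hc'W⟩ := hcomp w hw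
      have : ψ (ψ w) = (x * x) • a' + (y * y) • b' + (z * z) • c' := by
        rw [hwd]
        simp only [map_add, map_smul, ea, eb, ec, smul_smul]
      rw [this]
      exact W.add_mem (W.add_mem (W.smul_mem _ haW) (W.smul_mem _ hbW)) (W.smul_mem _ hc'W)
    have hcube : ψ (ψ (ψ v)) ∈ W := by
      obtain ⟨a', b', c', ea, eb, ec, hwd, haW, hbW, hc'W⟩ := hcomp v hvF₂
      have : ψ (ψ (ψ v)) = (x * x * x) • a' + (y * y * y) • b' + (z * z * z) • c' := by
        rw [hwd]
        simp only [map_add, map_smul, ea, eb, ec, smul_smul]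
      rw [this]
      exact W.add_mem (W.add_mem (W.smul_mem _ haW) (W.smul_mem _ hbW)) (W.smul_mem _ hc'W)
    rw [hW, Submodule.map_sup, Submodule.map_sup]
    refine sup_le (sup_le (le_sup_of_le_left le_sup_right) ?_) ?_
    · rw [← Submodule.map_comp, Submodule.map_le_iff_le_comap]
      intro w hw
      simp only [Submodule.mem_comap, LinearMap.comp_apply]
      exact hsq w hw
    · rw [← Submodule.map_comp, Submodule.map_le_iff_le_comap]
      intro w hw
      rw [hF₁, Submodule.mem_span_singleton] at hw
      obtain ⟨t, rfl⟩ := hw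
      simp only [Submodule.mem_comap, LinearMap.comp_apply, map_smul]
      exact W.smul_mem t hcube
end

section
/- Let K be a field, V a finite-dimensional K-vector space, and ψ an endomorphism of V such that V is the internal direct sum of the eigenspaces V_x and V_y of ψ for two distinct eigenvalues x, y ∈ K, with dim V_y = 2. Let F ⊆ V be a 2-dimensional subspace. Then F contains a nonzero eigenvector of ψ, or V_y ⊆ F + ψ(F). -/
/-- Type A case (7): if `ψ` has two distinct eigenvalues `x, y` whose eigenspaces span
`V`, with the `y`-eigenspace two-dimensional, then any `2`-dimensional subspace `F`
either contains a nonzero eigenvector of `ψ`, or `V_y ⊆ F + ψ(F)`. -/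
theorem eigenvector_or_eigenspace_le
    {K V : Type*} [Field K] [AddCommGroup V] [Module K V] [FiniteDimensional K V]
    (ψ : Module.End K V) (x y : K) (hxy : x ≠ y)
    (hsum : Module.End.eigenspace ψ x ⊔ Module.End.eigenspace ψ y = ⊤)
    (hdy : Module.finrank K (Module.End.eigenspace ψ y) = 2)
    (F : Submodule K V) (hF : Module.finrank K F = 2) :
    (∃ v ∈ F, v ≠ 0 ∧ ∃ μ : K, ψ v = μ • v) ∨
      Module.End.eigenspace ψ y ≤ F ⊔ Submodule.map ψ F := by
  set T : Module.End K V := ψ - x • 1 with hT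
  have hTapp : ∀ v : V, T v = ψ v - x • v := fun v => rfl
  have hkerT : LinearMap.ker T = Module.End.eigenspace ψ x := by
    ext v
    simp [Module.End.mem_eigenspace_iff, hTapp, sub_eq_zero, LinearMap.mem_ker]
  by_cases h : F ⊓ Module.End.eigenspace ψ x = ⊥
  · right
    -- T maps everything into the y-eigenspace
    have hrange : ∀ v : V, T v ∈ Module.End.eigenspace ψ y := by
      intro v
      have hv : v ∈ Module.End.eigenspace ψ x ⊔ Module.End.eigenspace ψ y := by
        rw [hsum]; trivial
      obtain ⟨a, ha, b, hb, rfl⟩ := Submodule.mem_sup.mp hv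
      have ha' : ψ a = x • a := Module.End.mem_eigenspace_iff.mp ha
      have hb' : ψ b = y • b := Module.End.mem_eigenspace_iff.mp hb
      have : T (a + b) = (y - x) • b := by
        rw [hTapp]; rw [map_add, ha', hb', smul_add, sub_smul]; abel
      rw [this]
      exact Submodule.smul_mem _ _ hb
    -- T is injective on F
    have hker : LinearMap.ker (T.domRestrict F) = ⊥ := by
      rw [LinearMap.ker_domRestrict, hkerT]
      rw [Submodule.eq_bot_iff]
      intro z hz
      have : (z : V) ∈ F ⊓ Module.End.eigenspace ψ x :=
        ⟨z.2, Submodule.mem_comap.mp hz⟩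
      rw [h] at this
      exact Subtype.ext this
    have hrk : Module.finrank K (Submodule.map T F) = 2 := by
      have := LinearMap.finrank_range_add_finrank_ker (T.domRestrict F)
      rw [LinearMap.range_domRestrict, hker, finrank_bot, add_zero, hF] at this
      exact this
    have hle : Submodule.map T F ≤ Module.End.eigenspace ψ y := by
      rintro _ ⟨f, hf, rfl⟩; exact hrange f
    have heq : Submodule.map T F = Module.End.eigenspace ψ y :=
      Submodule.eq_of_le_of_finrank_le hle (by rw [hdy, hrk])
    rw [← heq]
    rintro _ ⟨f, hf, rfl⟩
    rw [hTapp]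
    exact Submodule.sub_mem _ (Submodule.mem_sup_right ⟨f, hf, rfl⟩)
      (Submodule.mem_sup_left (F.smul_mem x hf))
  · left
    obtain ⟨v, hv, hv0⟩ := (Submodule.ne_bot_iff _).mp h
    exact ⟨v, hv.1, hv0, x, Module.End.mem_eigenspace_iff.mp hv.2⟩
end

section
/- Let K be a field, V a 6-dimensional K-vector space, and ψ an endomorphism of V such that V is the internal direct sum of the eigenspaces of ψ for three pairwise distinct eigenvalues x, y, z ∈ K, each eigenspace being 2-dimensional. Let F₁ ⊆ F₄ ⊆ F₅ be subspaces of V with dim F₁ = 1, dim F₄ = 4, dim F₅ = 5, ψ(F₁) ⊆ F₄, and ψ(F₄) ⊆ F₅. Then there exists a ψ-stable subspace W of V with F₁ ⊆ W ⊆ F₅ and such that W ⊆ F₄ or F₄ ⊆ W. -/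
private lemma extract_mem {K V : Type*} [Field K] [AddCommGroup V] [Module K V]
    (F : Submodule K V) (x y z : K) (hxy : x ≠ y) (hxz : x ≠ z)
    (a b c : V)
    (h0 : a + b + c ∈ F) (h1 : x • a + y • b + z • c ∈ F)
    (h2 : (x*x) • a + (y*y) • b + (z*z) • c ∈ F) : a ∈ F := by
  have hcomb : ((x-y)*(x-z)) • a =
      ((x*x) • a + (y*y) • b + (z*z) • c) - (y+z) • (x • a + y • b + z • c)
        + (y*z) • (a + b + c) := by
    module
  have hmem : ((x-y)*(x-z)) • a ∈ F := by
    rw [hcomb]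
    exact F.add_mem (F.sub_mem h2 (F.smul_mem _ h1)) (F.smul_mem _ h0)
  have hne : ((x-y)*(x-z)) ≠ 0 :=
    mul_ne_zero (sub_ne_zero.mpr hxy) (sub_ne_zero.mpr hxz)
  have := F.smul_mem ((x-y)*(x-z))⁻¹ hmem
  rwa [smul_smul, inv_mul_cancel₀ hne, one_smul] at this

/-- Type A case (8), fourth flag type: on a `6`-dimensional space with `ψ` having three
distinct eigenvalues of multiplicity `2` each, any flag `F₁ ⊆ F₄ ⊆ F₅` of dimensions
`1, 4, 5` with `ψ(F₁) ⊆ F₄` and `ψ(F₄) ⊆ F₅` can be refined by a `ψ`-stable subspace. -/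
theorem stable_refinement_dim_six
    {K V : Type*} [Field K] [AddCommGroup V] [Module K V] [FiniteDimensional K V]
    (hdimV : Module.finrank K V = 6)
    (ψ : Module.End K V) (x y z : K) (hxy : x ≠ y) (hxz : x ≠ z) (hyz : y ≠ z)
    (hsum : Module.End.eigenspace ψ x ⊔ Module.End.eigenspace ψ y ⊔
      Module.End.eigenspace ψ z = ⊤)
    (hdx : Module.finrank K (Module.End.eigenspace ψ x) = 2)
    (hdy : Module.finrank K (Module.End.eigenspace ψ y) = 2)
    (hdz : Module.finrank K (Module.End.eigenspace ψ z) = 2)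
    (F₁ F₄ F₅ : Submodule K V) (h14 : F₁ ≤ F₄) (h45 : F₄ ≤ F₅)
    (hd1 : Module.finrank K F₁ = 1) (hd4 : Module.finrank K F₄ = 4)
    (hd5 : Module.finrank K F₅ = 5)
    (hm1 : Submodule.map ψ F₁ ≤ F₄) (hm4 : Submodule.map ψ F₄ ≤ F₅) :
    ∃ W : Submodule K V, Submodule.map ψ W ≤ W ∧ F₁ ≤ W ∧ W ≤ F₅ ∧
      (W ≤ F₄ ∨ F₄ ≤ W) := by
  by_cases h5 : Submodule.map ψ F₅ ≤ F₅
  · exact ⟨F₅, h5, le_trans h14 h45, le_rfl, Or.inr h45⟩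
  -- Otherwise, F₄ is exactly F₅ ⊓ ψ⁻¹(F₅).
  have hF4G : F₄ ≤ F₅ ⊓ Submodule.comap ψ F₅ :=
    le_inf h45 (Submodule.map_le_iff_le_comap.mp hm4)
  have hGlt : F₅ ⊓ Submodule.comap ψ F₅ < F₅ := by
    refine lt_of_le_of_ne inf_le_left fun he => h5 ?_
    rw [Submodule.map_le_iff_le_comap]
    exact le_trans (le_of_eq he.symm) inf_le_right
  have hF4eq : F₄ = F₅ ⊓ Submodule.comap ψ F₅ := by
    refine Submodule.eq_of_le_of_finrank_le hF4G ?_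
    have h1 := Submodule.finrank_lt_finrank_of_lt hGlt
    omega
  -- membership criterion: an eigenvector in F₅ lies in F₄
  have key : ∀ (μ : K) (w : V), w ∈ Module.End.eigenspace ψ μ → w ∈ F₅ →
      w ∈ Module.End.eigenspace ψ μ ⊓ F₄ := by
    intro μ w hwE hw5
    refine ⟨hwE, ?_⟩
    rw [hF4eq]
    refine ⟨hw5, ?_⟩
    show ψ w ∈ F₅
    rw [Module.End.mem_eigenspace_iff.mp hwE]
    exact F₅.smul_mem _ hw5
  refine ⟨(Module.End.eigenspace ψ x ⊓ F₄ ⊔ Module.End.eigenspace ψ y ⊓ F₄) ⊔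
    Module.End.eigenspace ψ z ⊓ F₄, ?_, ?_, ?_, Or.inl ?_⟩
  · -- stability
    have stab : ∀ μ : K, Submodule.map ψ (Module.End.eigenspace ψ μ ⊓ F₄) ≤
        Module.End.eigenspace ψ μ ⊓ F₄ := by
      intro μ
      rintro _ ⟨w, ⟨hwE, hwF⟩, rfl⟩
      show ψ w ∈ _
      rw [Module.End.mem_eigenspace_iff.mp hwE]
      exact ⟨Submodule.smul_mem _ _ hwE, Submodule.smul_mem _ _ hwF⟩
    rw [Submodule.map_sup, Submodule.map_sup]
    exact sup_le_sup (sup_le_sup (stab x) (stab y)) (stab z)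
  · -- F₁ ≤ W
    intro v hv
    have hvtop : v ∈ Module.End.eigenspace ψ x ⊔ Module.End.eigenspace ψ y ⊔
        Module.End.eigenspace ψ z := by rw [hsum]; trivial
    obtain ⟨p, hp, c, hc, rfl⟩ := Submodule.mem_sup.mp hvtop
    obtain ⟨a, ha, b, hb, rfl⟩ := Submodule.mem_sup.mp hp
    have hxa : ψ a = x • a := Module.End.mem_eigenspace_iff.mp ha
    have hyb : ψ b = y • b := Module.End.mem_eigenspace_iff.mp hb
    have hzc : ψ c = z • c := Module.End.mem_eigenspace_iff.mp hc
    have hv5 : a + b + c ∈ F₅ := h45 (h14 hv)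
    have hψv4 : ψ (a + b + c) ∈ F₄ := hm1 (Submodule.mem_map_of_mem hv)
    have e1 : ψ (a + b + c) = x • a + y • b + z • c := by
      simp [map_add, hxa, hyb, hzc]
    have e2 : ψ (ψ (a + b + c)) = (x*x) • a + (y*y) • b + (z*z) • c := by
      rw [e1]; simp only [map_add, map_smul, hxa, hyb, hzc, smul_smul]
    have h1 : x • a + y • b + z • c ∈ F₅ := e1 ▸ h45 hψv4
    have h2 : (x*x) • a + (y*y) • b + (z*z) • c ∈ F₅ :=
      e2 ▸ hm4 (Submodule.mem_map_of_mem hψv4)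
    have ha5 : a ∈ F₅ := extract_mem F₅ x y z hxy hxz a b c hv5 h1 h2
    have hb5 : b ∈ F₅ := by
      refine extract_mem F₅ y x z hxy.symm hyz b a c ?_ ?_ ?_
      · rw [show b + a + c = a + b + c by abel]; exact hv5
      · rw [show y • b + x • a + z • c = x • a + y • b + z • c by abel]; exact h1
      · rw [show (y*y) • b + (x*x) • a + (z*z) • c
            = (x*x) • a + (y*y) • b + (z*z) • c by abel]; exact h2
    have hc5 : c ∈ F₅ := by
      refine extract_mem F₅ z x y hxz.symm hyz.symm c a b ?_ ?_ ?_
      · rw [show c + a + b = a + b + c by abel]; exact hv5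
      · rw [show z • c + x • a + y • b = x • a + y • b + z • c by abel]; exact h1
      · rw [show (z*z) • c + (x*x) • a + (y*y) • b
            = (x*x) • a + (y*y) • b + (z*z) • c by abel]; exact h2
    exact add_mem (add_mem
      (Submodule.mem_sup_left (Submodule.mem_sup_left (key x a ha ha5)))
      (Submodule.mem_sup_left (Submodule.mem_sup_right (key y b hb hb5))))
      (Submodule.mem_sup_right (key z c hc hc5))
  · exact le_trans (sup_le (sup_le inf_le_right inf_le_right) inf_le_right) h45
  · exact sup_le (sup_le inf_le_right inf_le_right) inf_le_right
end

section
/- Let K be a field, V a K-vector space, and ψ an endomorphism of V annihilated by a monic polynomial of degree 3 over K. Let F₁ ⊆ F₂ ⊆ F₃ be subspaces of V with dim F₁ = 1, dim F₂ = 2, dim F₃ = 3, ψ(F₁) ⊆ F₂, and ψ(F₂) ⊆ F₃. If neither F₁ nor F₂ is ψ-stable, then F₃ = F₁ + ψ(F₁) + ψ²(F₁) and F₃ is ψ-stable. -/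
open Submodule Polynomial Module

/-- If `ψ` is annihilated by a monic cubic polynomial and `F₁ ⊆ F₂ ⊆ F₃` is a flag of
dimensions `1, 2, 3` with `ψ(F₁) ⊆ F₂` and `ψ(F₂) ⊆ F₃`, and neither `F₁` nor `F₂` is
`ψ`-stable, then `F₃ = F₁ + ψ(F₁) + ψ²(F₁)` and `F₃` is `ψ`-stable. -/
theorem cyclic_cubic_flag_stable
    {K V : Type*} [Field K] [AddCommGroup V] [Module K V]
    (ψ : Module.End K V) (p : Polynomial K) (hp : p.Monic) (hdeg : p.natDegree = 3)
    (hann : Polynomial.aeval ψ p = 0)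
    (F₁ F₂ F₃ : Submodule K V) (h12 : F₁ ≤ F₂) (h23 : F₂ ≤ F₃)
    (hd1 : Module.finrank K F₁ = 1) (hd2 : Module.finrank K F₂ = 2)
    (hd3 : Module.finrank K F₃ = 3)
    (hm1 : Submodule.map ψ F₁ ≤ F₂) (hm2 : Submodule.map ψ F₂ ≤ F₃)
    (hn1 : ¬ Submodule.map ψ F₁ ≤ F₁) (hn2 : ¬ Submodule.map ψ F₂ ≤ F₂) :
    F₃ = F₁ ⊔ Submodule.map ψ F₁ ⊔ Submodule.map (ψ ∘ₗ ψ) F₁ ∧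
      Submodule.map ψ F₃ ≤ F₃ := by
  have hfd3 : FiniteDimensional K F₃ := FiniteDimensional.of_finrank_pos (by omega)
  have hfd2 : FiniteDimensional K F₂ := Submodule.finiteDimensional_of_le h23
  have hfd1 : FiniteDimensional K F₁ := Submodule.finiteDimensional_of_le h12
  -- get a generator of F₁
  obtain ⟨v, hF1⟩ : F₁.IsPrincipal := F₁.finrank_le_one_iff_isPrincipal.mp hd1.le
  have hvF1 : v ∈ F₁ := hF1 ▸ mem_span_singleton_self v
  have hmap1 : Submodule.map ψ F₁ = span K {ψ v} := by
    rw [hF1, Submodule.map_span, Set.image_singleton]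
  have hmap2 : Submodule.map (ψ ∘ₗ ψ) F₁ = span K {ψ (ψ v)} := by
    rw [hF1, Submodule.map_span, Set.image_singleton]; rfl
  have hψv : ψ v ∉ F₁ := by
    intro h
    exact hn1 (hmap1 ▸ (span_le.mpr (Set.singleton_subset_iff.mpr h)))
  have hψvF2 : ψ v ∈ F₂ := hm1 ⟨v, hvF1, rfl⟩
  -- F₂ = span {v, ψ v}
  have hW2le : span K {v, ψ v} ≤ F₂ := by
    rw [span_le, Set.insert_subset_iff, Set.singleton_subset_iff]
    exact ⟨h12 hvF1, hψvF2⟩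
  have hF1lt : F₁ < span K {v, ψ v} := by
    refine lt_of_le_of_ne ?_ ?_
    · rw [hF1]; exact span_mono (by simp)
    · intro h; exact hψv (h ▸ subset_span (by simp))
  have hF2 : span K {v, ψ v} = F₂ := by
    have : FiniteDimensional K (span K {v, ψ v}) := Submodule.finiteDimensional_of_le hW2le
    apply Submodule.eq_of_le_of_finrank_le hW2le
    have h1 := Submodule.finrank_lt_finrank_of_lt hF1lt
    omega
  have hψψv : ψ (ψ v) ∉ F₂ := by
    intro h
    apply hn2
    have hms : Submodule.map ψ F₂ = span K {ψ v, ψ (ψ v)} := by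
      rw [← hF2, Submodule.map_span, Set.image_insert_eq, Set.image_singleton]
    rw [hms, span_le, Set.insert_subset_iff, Set.singleton_subset_iff]
    exact ⟨hψvF2, h⟩
  have hψψvF3 : ψ (ψ v) ∈ F₃ := hm2 ⟨ψ v, hψvF2, rfl⟩
  -- F₃ = span {v, ψ v, ψ ψ v}
  have hW3le : span K {v, ψ v, ψ (ψ v)} ≤ F₃ := by
    rw [span_le, Set.insert_subset_iff, Set.insert_subset_iff, Set.singleton_subset_iff]
    exact ⟨h23 (h12 hvF1), h23 hψvF2, hψψvF3⟩
  have hF2lt : F₂ < span K {v, ψ v, ψ (ψ v)} := by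
    refine lt_of_le_of_ne ?_ ?_
    · rw [← hF2]
      exact span_mono (by intro x h; simp only [Set.mem_insert_iff, Set.mem_singleton_iff] at h ⊢; tauto)
    · intro h; exact hψψv (h ▸ subset_span (by simp))
  have hF3 : span K {v, ψ v, ψ (ψ v)} = F₃ := by
    have : FiniteDimensional K (span K {v, ψ v, ψ (ψ v)}) := Submodule.finiteDimensional_of_le hW3le
    apply Submodule.eq_of_le_of_finrank_le hW3le
    have h1 := Submodule.finrank_lt_finrank_of_lt hF2lt
    omega
  have heq : F₃ = F₁ ⊔ Submodule.map ψ F₁ ⊔ Submodule.map (ψ ∘ₗ ψ) F₁ := by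
    rw [hmap1, hmap2, hF1, ← hF3,
      show ({v, ψ v, ψ (ψ v)} : Set V) = insert v (insert (ψ v) {ψ (ψ v)}) from rfl,
      Submodule.span_insert, Submodule.span_insert, sup_assoc]
  refine ⟨heq, ?_⟩
  -- stability: ψ^3 v ∈ F₃
  have hψ3 : ψ (ψ (ψ v)) ∈ F₃ := by
    have hsplit : p.eraseLead + X ^ 3 = p := by
      have h := p.eraseLead_add_C_mul_X_pow
      rwa [hp.leadingCoeff, map_one, one_mul, hdeg] at h
    have hdq : p.eraseLead.natDegree < 3 := by
      have := p.eraseLead_natDegree_le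
      omega
    have hadd : Polynomial.aeval ψ p.eraseLead + ψ ^ 3 = 0 := by
      have h := hann
      rw [← hsplit, map_add, map_pow, aeval_X] at h
      exact h
    have hkey : (ψ ^ 3 : Module.End K V) = - Polynomial.aeval ψ p.eraseLead :=
      eq_neg_of_add_eq_zero_right hadd
    have h3v : ψ (ψ (ψ v)) = (ψ ^ 3 : Module.End K V) v := by
      simp [pow_succ, Module.End.mul_apply]
    rw [h3v, hkey, LinearMap.neg_apply]
    refine neg_mem ?_
    rw [aeval_eq_sum_range' hdq, LinearMap.sum_apply]
    refine Submodule.sum_mem _ fun i hi => ?_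
    rw [LinearMap.smul_apply]
    refine Submodule.smul_mem _ _ ?_
    fin_cases hi
    · simpa using h23 (h12 hvF1)
    · simpa [pow_one] using h23 hψvF2
    · simpa [pow_succ, Module.End.mul_apply] using hψψvF3
  have hms3 : Submodule.map ψ F₃ = span K {ψ v, ψ (ψ v), ψ (ψ (ψ v))} := by
    rw [← hF3, Submodule.map_span, Set.image_insert_eq, Set.image_insert_eq,
      Set.image_singleton]
  rw [hms3, span_le, Set.insert_subset_iff, Set.insert_subset_iff, Set.singleton_subset_iff]
  exact ⟨h23 hψvF2, hψψvF3, hψ3⟩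
end

section
/- Let K be a field, V a K-vector space, B : V × V → K a bilinear form, ψ an endomorphism of V that is skew-adjoint with respect to B, and c ∈ K a scalar with ψ³ = c • ψ. If v ∈ V satisfies B(v, v) = 0, B(v, ψ v) = 0, and B(ψ v, ψ v) = 0, then the subspace spanned by v, ψ v, ψ² v is ψ-stable and totally isotropic for B. -/
/-- If `ψ` is skew-adjoint for a bilinear form `B` with `ψ³ = c • ψ`, and `v` satisfies
`B(v,v) = B(v, ψ v) = B(ψ v, ψ v) = 0`, then `span{v, ψ v, ψ² v}` is `ψ`-stable and
totally isotropic. -/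
theorem span_orbit_isotropic_stable_of_cube_smul
    {K V : Type*} [Field K] [AddCommGroup V] [Module K V]
    (B : V →ₗ[K] V →ₗ[K] K) (ψ : Module.End K V)
    (hskew : ∀ v w : V, B (ψ v) w = - B v (ψ w))
    (c : K) (hψ : ψ ^ 3 = c • ψ)
    (v : V) (h0 : B v v = 0) (h1 : B v (ψ v) = 0) (h2 : B (ψ v) (ψ v) = 0) :
    Submodule.map ψ (Submodule.span K {v, ψ v, ψ (ψ v)}) ≤
        Submodule.span K {v, ψ v, ψ (ψ v)} ∧
      ∀ u ∈ Submodule.span K {v, ψ v, ψ (ψ v)},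
        ∀ u' ∈ Submodule.span K {v, ψ v, ψ (ψ v)}, B u u' = 0 := by
  set S : Set V := {v, ψ v, ψ (ψ v)} with hS
  have h3 : ψ (ψ (ψ v)) = c • ψ v := by
    have := congrArg (fun f : Module.End K V => f v) hψ
    simpa [pow_succ, Module.End.mul_apply] using this
  -- all nine pairings vanish
  have b02 : B v (ψ (ψ v)) = 0 := by
    have h := hskew v (ψ v); rw [h2] at h; exact neg_eq_zero.mp h.symm
  have b10 : B (ψ v) v = 0 := by rw [hskew, h1, neg_zero]
  have b12 : B (ψ v) (ψ (ψ v)) = 0 := by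
    rw [hskew, h3]; simp [h1]
  have b20 : B (ψ (ψ v)) v = 0 := by rw [hskew, h2, neg_zero]
  have b21 : B (ψ (ψ v)) (ψ v) = 0 := by
    have h := hskew (ψ v) (ψ v); rw [b12, neg_zero] at h; exact h
  have b22 : B (ψ (ψ v)) (ψ (ψ v)) = 0 := by
    rw [hskew, h3]; simp [h2]
  have key : ∀ x ∈ S, ∀ y ∈ S, B x y = 0 := by
    rintro x (rfl | rfl | rfl) y (rfl | rfl | rfl) <;> assumption
  have inner : ∀ x ∈ S, ∀ u' ∈ Submodule.span K S, B x u' = 0 := by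
    intro x hx u' hu'
    have : Submodule.span K S ≤ LinearMap.ker (B x) := by
      rw [Submodule.span_le]; intro y hy; exact key x hx y hy
    exact this hu'
  constructor
  · rw [Submodule.map_span, Submodule.span_le]
    rintro _ ⟨x, (rfl | rfl | rfl), rfl⟩
    · exact Submodule.subset_span (by simp [hS])
    · exact Submodule.subset_span (by simp [hS])
    · rw [h3]
      exact Submodule.smul_mem _ _ (Submodule.subset_span (by simp [hS]))
  · intro u hu u' hu'
    have : Submodule.span K S ≤ LinearMap.ker (B.flip u') := by
      rw [Submodule.span_le]; intro x hx
      simpa using inner x hx u' hu'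
    simpa using this hu
end

section
/- Let n ≥ 2 be an integer. For 1 ≤ j ≤ n set q_j = (n + 1 − 2j)/(2n) ∈ ℚ. Let σ be a permutation of {1, …, n} and let k₁, …, k_n be integers with k₁ + ⋯ + k_n = 0. Define x_i = q_{σ(i)} + k_i for 1 ≤ i ≤ n. If 0 ≤ x_i − x_{i+1} ≤ 1/n for all 1 ≤ i ≤ n − 1, then x_i = q_i for all i. -/
/-! The difference of two coordinates of a point of the orbit is `m / n` with `m ∈ ℤ` and
`m ≡ σ j - σ i ≢ 0 (mod n)`, so the gap condition forces every consecutive gap to be exactly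
`1 / n`, which is also the common gap of the barycenter. Hence `x - q` is constant; it sums to
zero because permuting coordinates preserves the sum and the integer translation has sum zero. -/

open Finset

theorem Fin.val_sub_add_mul_ne_zero {n : ℕ} {a b : Fin n} (hab : a ≠ b) (d : ℤ) :
    ((b : ℕ) : ℤ) - (a : ℕ) + n * d ≠ 0 := by
  intro h
  have hdvd : (n : ℤ) ∣ (b : ℕ) - (a : ℕ) := ⟨-d, by linarith⟩
  have hlt : |((b : ℕ) : ℤ) - (a : ℕ)| < n := by
    rw [abs_sub_lt_iff]; constructor <;> omega
  exact hab (Fin.ext (by have := Int.eq_zero_of_abs_lt_dvd hdvd hlt; omega)).symm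

theorem Int.eq_one_of_ne_zero_of_div_nonneg_of_div_le {n : ℕ} {m : ℤ} (hn : 0 < n)
    (hm : m ≠ 0) (h0 : 0 ≤ (m : ℚ) / n) (h1 : (m : ℚ) / n ≤ 1 / n) : m = 1 := by
  have hnQ : (0 : ℚ) < n := by exact_mod_cast hn
  have h0' : (0 : ℚ) ≤ m := by simpa using (le_div_iff₀ hnQ).mp h0
  have h1' : (m : ℚ) ≤ 1 := (div_le_div_iff_of_pos_right hnQ).mp h1
  have : 0 ≤ m ∧ m ≤ 1 := ⟨by exact_mod_cast h0', by exact_mod_cast h1'⟩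
  omega

theorem Fin.apply_eq_apply_of_forall_succ {α : Type*} {n : ℕ} {f : Fin n → α}
    (h : ∀ (i : ℕ) (hi : i + 1 < n), f ⟨i, by omega⟩ = f ⟨i + 1, hi⟩) (a b : Fin n) :
    f a = f b := by
  suffices key : ∀ (j : ℕ) (hj : j < n), f ⟨j, hj⟩ = f ⟨0, by omega⟩ by
    rw [key a a.2, key b b.2]
  intro j
  induction j with
  | zero => intro _; rfl
  | succ j ih => intro hj; rw [← h j hj, ih]

def barycenter (n : ℕ) (j : Fin n) : ℚ := ((n : ℚ) - 1 - 2 * (j : ℕ)) / (2 * n)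

theorem barycenter_sub_barycenter {n : ℕ} (a b : Fin n) :
    barycenter n a - barycenter n b = (((b : ℕ) : ℚ) - (a : ℕ)) / n := by
  have : (n : ℚ) ≠ 0 := by exact_mod_cast a.pos.ne'
  unfold barycenter
  field_simp
  ring

theorem sum_comp_perm_add_intCast {n : ℕ} (q : Fin n → ℚ) (σ : Equiv.Perm (Fin n))
    {k : Fin n → ℤ} (hk : ∑ i, k i = 0) : ∑ i, (q (σ i) + k i) = ∑ i, q i := by
  rw [sum_add_distrib, Equiv.sum_comp σ q, ← Int.cast_sum, hk, Int.cast_zero, add_zero]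

theorem barycenter_orbit_sub {n : ℕ} (σ : Equiv.Perm (Fin n)) (k : Fin n → ℤ) (i j : Fin n) :
    barycenter n (σ i) + k i - (barycenter n (σ j) + k j)
      = (((σ j : ℕ) - (σ i : ℕ) + n * (k i - k j) : ℤ) : ℚ) / n := by
  have : (n : ℚ) ≠ 0 := by exact_mod_cast i.pos.ne'
  rw [add_sub_add_comm, barycenter_sub_barycenter]
  push_cast
  field_simp

theorem barycenter_orbit_sub_eq_one_div_of_nonneg_of_le {n : ℕ} (σ : Equiv.Perm (Fin n))
    (k : Fin n → ℤ) {i j : Fin n} (hij : i ≠ j)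
    (h0 : 0 ≤ barycenter n (σ i) + k i - (barycenter n (σ j) + k j))
    (h1 : barycenter n (σ i) + k i - (barycenter n (σ j) + k j) ≤ 1 / n) :
    barycenter n (σ i) + k i - (barycenter n (σ j) + k j) = 1 / n := by
  rw [barycenter_orbit_sub] at h0 h1 ⊢
  have hm := Fin.val_sub_add_mul_ne_zero (σ.injective.ne hij) (k i - k j)
  rw [Int.eq_one_of_ne_zero_of_div_nonneg_of_div_le i.pos hm h0 h1, Int.cast_one]

/-- Type A case (2) rigidity: the only element of the affine Weyl orbit of the Iwahori
barycenter `q_j = (n + 1 - 2j)/(2n)` with all consecutive gaps in `[0, 1/n]` is the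
barycenter itself. -/
theorem affine_weyl_orbit_barycenter_rigidity
    (n : ℕ) (σ : Equiv.Perm (Fin n)) (k : Fin n → ℤ)
    (hk : ∑ i, k i = 0)
    (q : Fin n → ℚ)
    (hq : ∀ j : Fin n, q j = ((n : ℚ) - 1 - 2 * ((j : ℕ) : ℚ)) / (2 * n))
    (x : Fin n → ℚ) (hx : ∀ i : Fin n, x i = q (σ i) + (k i : ℚ))
    (hgap : ∀ (i : ℕ) (h : i + 1 < n),
      0 ≤ x ⟨i, by omega⟩ - x ⟨i + 1, h⟩ ∧
        x ⟨i, by omega⟩ - x ⟨i + 1, h⟩ ≤ 1 / n) :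
    ∀ i : Fin n, x i = q i := by
  obtain rfl : q = barycenter n := funext hq
  have hstep : ∀ (i : ℕ) (hi : i + 1 < n), x ⟨i, by omega⟩ - x ⟨i + 1, hi⟩ = 1 / n := by
    intro i hi
    simp only [hx] at hgap ⊢
    exact barycenter_orbit_sub_eq_one_div_of_nonneg_of_le σ k (by simp) (hgap i hi).1 (hgap i hi).2
  have hconst : ∀ i j, x i - barycenter n i = x j - barycenter n j := by
    refine Fin.apply_eq_apply_of_forall_succ fun i hi ↦ ?_
    have := barycenter_sub_barycenter ⟨i, by omega⟩ ⟨i + 1, hi⟩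
    simp only [Nat.cast_add, Nat.cast_one, add_sub_cancel_left] at this
    linarith [hstep i hi]
  have hsum : ∑ j, (x j - barycenter n j) = 0 := by
    simp only [hx]
    rw [sum_sub_distrib, sum_comp_perm_add_intCast _ σ hk, sub_self]
  intro i
  rw [sum_congr rfl fun j _ ↦ hconst j i, sum_const, card_univ, Fintype.card_fin] at hsum
  exact sub_eq_zero.mp ((smul_eq_zero.mp hsum).resolve_left i.pos.ne')
end

section
/- Let K be a field of characteristic different from 2, V a finite-dimensional K-vector space, B : V × V → K a nondegenerate symmetric bilinear form, and ψ an endomorphism of V that is skew-adjoint with respect to B. Let x ∈ K be nonzero, and suppose V is the internal direct sum of the eigenspaces V_x, V_0, V_{−x} of ψ for the eigenvalues x, 0, −x, with dim V_0 = 1. If v ∈ V satisfies B(v, v) = 0 and B(ψ v, ψ v) = 0, then the subspace spanned by v and ψ v is ψ-stable. -/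
/-- Type B case (3): for a nondegenerate symmetric bilinear space `(V, B)` in
characteristic `≠ 2` with skew-adjoint `ψ` whose eigenspaces for `x, 0, -x` span `V`
(with the `0`-eigenspace one-dimensional), any `v` with `B(v, v) = 0` and
`B(ψ v, ψ v) = 0` generates a `ψ`-stable subspace `span{v, ψ v}`. -/
theorem span_self_psi_stable_of_isotropic_vector_and_image
    {K V : Type*} [Field K] [AddCommGroup V] [Module K V] [FiniteDimensional K V]
    (hchar : (2 : K) ≠ 0)
    (B : V →ₗ[K] V →ₗ[K] K)
    (hsymm : ∀ v w : V, B v w = B w v)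
    (hnd : ∀ v : V, (∀ w : V, B v w = 0) → v = 0)
    (ψ : Module.End K V) (hskew : ∀ v w : V, B (ψ v) w = - B v (ψ w))
    (x : K) (hx : x ≠ 0)
    (hsum : Module.End.eigenspace ψ x ⊔ Module.End.eigenspace ψ 0 ⊔
      Module.End.eigenspace ψ (-x) = ⊤)
    (hd0 : Module.finrank K (Module.End.eigenspace ψ 0) = 1)
    (v : V) (hv0 : B v v = 0) (hv1 : B (ψ v) (ψ v) = 0) :
    Submodule.map ψ (Submodule.span K {v, ψ v}) ≤ Submodule.span K {v, ψ v} := by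
  -- orthogonality of eigenspaces for λ + μ ≠ 0
  have horth : ∀ (l m : K), l + m ≠ 0 → ∀ u w : V,
      u ∈ Module.End.eigenspace ψ l → w ∈ Module.End.eigenspace ψ m → B u w = 0 := by
    intro l m hlm u w hu hw
    rw [Module.End.mem_eigenspace_iff] at hu hw
    have h := hskew u w
    rw [hu, hw, map_smul, map_smul] at h
    have : (l + m) * B u w = 0 := by
      simp only [LinearMap.smul_apply, smul_eq_mul] at h
      linear_combination h
    rcases mul_eq_zero.mp this with h' | h'
    · exact absurd h' hlm
    · exact h'
  -- decompose v
  have hvmem : v ∈ Module.End.eigenspace ψ x ⊔ Module.End.eigenspace ψ 0 ⊔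
      Module.End.eigenspace ψ (-x) := hsum ▸ Submodule.mem_top
  obtain ⟨ab, hab, c, hc, hvabc⟩ := Submodule.mem_sup.mp hvmem
  obtain ⟨a, ha, b, hb, rfl⟩ := Submodule.mem_sup.mp hab
  have ha' : ψ a = x • a := Module.End.mem_eigenspace_iff.mp ha
  have hb' : ψ b = 0 := by
    have := Module.End.mem_eigenspace_iff.mp hb; simpa using this
  have hc' : ψ c = (-x) • c := Module.End.mem_eigenspace_iff.mp hc
  -- orthogonality facts
  have hxx : B a a = 0 := horth x x (by
    intro h
    have h2 : (2:K) * x = 0 := by linear_combination h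
    rcases mul_eq_zero.mp h2 with h' | h'
    exacts [hchar h', hx h']) a a ha ha
  have hcc : B c c = 0 := horth (-x) (-x) (by
    intro h
    have h2 : (2:K) * x = 0 := by linear_combination -h
    rcases mul_eq_zero.mp h2 with h' | h'
    exacts [hchar h', hx h']) c c hc hc
  have hab0 : B a b = 0 := horth x 0 (by simpa using hx) a b ha hb
  have hbc0 : B b c = 0 := horth 0 (-x) (by simpa using hx) b c hb hc
  have hba0 : B b a = 0 := by rw [hsymm]; exact hab0
  have hcb0 : B c b = 0 := by rw [hsymm]; exact hbc0
  have hca : B c a = B a c := (hsymm a c).symm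
  -- ψ v
  have hpsiv : ψ v = x • a - x • c := by
    rw [← hvabc]; simp [ha', hb', hc', map_add]; module
  -- B a c = 0 from hv1
  have hac0 : B a c = 0 := by
    have h1 : B (ψ v) (ψ v) = x * x * (B a a) - x * x * (B a c)
        - x * x * (B c a) + x * x * (B c c) := by
      rw [hpsiv]
      simp only [map_sub, map_smul, LinearMap.sub_apply, LinearMap.smul_apply,
        smul_eq_mul]
      ring
    rw [hv1, hxx, hcc, hca] at h1
    have h2 : (2 * (x * x)) * B a c = 0 := by linear_combination h1
    rcases mul_eq_zero.mp h2 with h' | h'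
    · rcases mul_eq_zero.mp h' with h'' | h''
      · exact absurd h'' hchar
      · exact absurd (mul_self_eq_zero.mp h'') hx
    · exact h'
  -- B b b = 0 from hv0
  have hbb0 : B b b = 0 := by
    have h1 : B v v = B a a + B a b + B a c + B b a + B b b + B b c
        + B c a + B c b + B c c := by
      rw [← hvabc]; simp only [map_add, LinearMap.add_apply]; ring
    rw [hv0, hxx, hcc, hab0, hbc0, hba0, hcb0, hca, hac0] at h1
    linear_combination -h1
  -- b = 0
  have hb0 : b = 0 := by
    by_cases hbz : b = 0
    · exact hbz
    · exfalso
      have hbne : (⟨b, hb⟩ : Module.End.eigenspace ψ 0) ≠ 0 := by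
        simp [Subtype.ext_iff, hbz]
      have hspan := (finrank_eq_one_iff_of_nonzero'
        (⟨b, hb⟩ : Module.End.eigenspace ψ 0) hbne).mp hd0
      have : b = 0 := by
        apply hnd
        intro w
        have hwmem : w ∈ Module.End.eigenspace ψ x ⊔ Module.End.eigenspace ψ 0 ⊔
            Module.End.eigenspace ψ (-x) := hsum ▸ Submodule.mem_top
        obtain ⟨ab', hab', c', hc', rfl⟩ := Submodule.mem_sup.mp hwmem
        obtain ⟨a', ha2, b', hb2, rfl⟩ := Submodule.mem_sup.mp hab'
        obtain ⟨t, ht⟩ := hspan ⟨b', hb2⟩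
        have htb : b' = t • b := by
          have := congrArg Subtype.val ht; simpa using this.symm
        have h1 : B b a' = 0 := horth 0 x (by simpa using hx) b a' hb ha2
        have h2 : B b c' = 0 := horth 0 (-x) (by simpa using hx) b c' hb hc'
        have h3 : B b b' = 0 := by rw [htb, map_smul, smul_eq_mul, hbb0, mul_zero]
        simp [map_add, h1, h2, h3]
      exact absurd this hbz
  -- ψ (ψ v) = x^2 • v
  have hpsipsiv : ψ (ψ v) = (x * x) • v := by
    rw [hpsiv, ← hvabc, hb0]
    simp only [map_sub, map_smul, ha', hc']
    module
  -- conclude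
  rw [Submodule.map_span_le]
  rintro m (rfl | rfl)
  · exact Submodule.subset_span (Or.inr rfl)
  · rw [hpsipsiv]
    exact Submodule.smul_mem _ _ (Submodule.subset_span (Or.inl rfl))
end

section
/- Let K be a field of characteristic different from 2, V a finite-dimensional K-vector space, ω : V × V → K a nondegenerate alternating bilinear form (ω(v, v) = 0 for all v), and ψ an endomorphism of V that is skew-adjoint with respect to ω. Let x ∈ K be nonzero, and suppose V is the internal direct sum of the eigenspaces V_x, V_0, V_{−x} of ψ for the eigenvalues x, 0, −x, with dim V_x = dim V_{−x} = 1. If v ∈ V satisfies ω(v, ψ v) = 0, then the subspace spanned by v and ψ v is ψ-stable. -/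
/-- Type C case (2)(i): for a nondegenerate alternating bilinear space `(V, ω)` in
characteristic `≠ 2` with skew-adjoint `ψ` whose eigenspaces for `x, 0, -x` span `V`
(with the `±x`-eigenspaces one-dimensional), any `v` with `ω(v, ψ v) = 0` generates a
`ψ`-stable subspace `span{v, ψ v}`. -/
theorem symplectic_span_self_psi_stable
    {K V : Type*} [Field K] [AddCommGroup V] [Module K V] [FiniteDimensional K V]
    (hchar : (2 : K) ≠ 0)
    (ω : V →ₗ[K] V →ₗ[K] K)
    (halt : ∀ v : V, ω v v = 0)
    (hnd : ∀ v : V, (∀ w : V, ω v w = 0) → v = 0)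
    (ψ : Module.End K V) (hskew : ∀ v w : V, ω (ψ v) w = - ω v (ψ w))
    (x : K) (hx : x ≠ 0)
    (hsum : Module.End.eigenspace ψ x ⊔ Module.End.eigenspace ψ 0 ⊔
      Module.End.eigenspace ψ (-x) = ⊤)
    (hdx : Module.finrank K (Module.End.eigenspace ψ x) = 1)
    (hdnx : Module.finrank K (Module.End.eigenspace ψ (-x)) = 1)
    (v : V) (hv : ω v (ψ v) = 0) :
    Submodule.map ψ (Submodule.span K {v, ψ v}) ≤ Submodule.span K {v, ψ v} := by
  -- antisymmetry
  have hanti : ∀ p q : V, ω q p = - ω p q := by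
    intro p q
    have h := halt (p + q)
    simp only [map_add, LinearMap.add_apply, halt] at h
    linear_combination h
  -- orthogonality of eigenvectors with non-opposite eigenvalues
  have horth : ∀ (lam mu : K) (a b : V), lam + mu ≠ 0 →
      ψ a = lam • a → ψ b = mu • b → ω a b = 0 := by
    intro lam mu a b hlm ha hb
    have h := hskew a b
    rw [ha, hb, map_smul, map_smul] at h
    simp only [LinearMap.smul_apply, smul_eq_mul] at h
    have h2 : (lam + mu) * ω a b = 0 := by linear_combination h
    exact (mul_eq_zero.mp h2).resolve_left hlm
  -- decompose v
  have hvmem : v ∈ Module.End.eigenspace ψ x ⊔ Module.End.eigenspace ψ 0 ⊔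
      Module.End.eigenspace ψ (-x) := hsum ▸ Submodule.mem_top
  obtain ⟨u, hu, c, hc, rfl⟩ := Submodule.mem_sup.mp hvmem
  obtain ⟨a, ha, b, hb, rfl⟩ := Submodule.mem_sup.mp hu
  rw [Module.End.mem_eigenspace_iff] at ha hb hc
  rw [zero_smul] at hb
  have h2x : x + x ≠ 0 := by
    intro h; apply hx
    have h2 : (2:K) * x = 0 := by linear_combination h
    exact (mul_eq_zero.mp h2).resolve_left hchar
  have hxn : x + (-x) = 0 := by ring
  -- key pairings
  have hab : ω a b = 0 := horth x 0 a b (by simpa using hx) ha (by rw [hb, zero_smul])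
  have hbc : ω b c = 0 := horth 0 (-x) b c (by simpa using neg_ne_zero.mpr hx) (by rw [hb, zero_smul]) hc
  have hac : ω a c = 0 := by
    have hpsi : ψ (a + b + c) = x • a + (-x) • c := by
      simp [map_add, ha, hb, hc]
    rw [hpsi] at hv
    simp only [map_add, LinearMap.add_apply, map_smul, smul_eq_mul] at hv
    have hba : ω b a = 0 := by rw [hanti a b, hab, neg_zero]
    have hca : ω c a = - ω a c := hanti a c
    rw [hba, hca, hbc, halt c] at hv
    have h2 : ((2:K) * x) * ω a c = 0 := by linear_combination -hv + x * halt a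
    exact (mul_eq_zero.mp h2).resolve_left (mul_ne_zero hchar hx)
  -- a = 0 or c = 0
  have hkey : a = 0 ∨ c = 0 := by
    by_contra hcon
    push_neg at hcon
    obtain ⟨ha0, hc0⟩ := hcon
    -- c spans the (-x)-eigenspace
    have hspanc : Submodule.span K {c} = Module.End.eigenspace ψ (-x) := by
      apply Submodule.eq_of_le_of_finrank_eq
      · rw [Submodule.span_le]; simpa [Module.End.mem_eigenspace_iff] using hc
      · rw [finrank_span_singleton hc0, hdnx]
    apply ha0
    apply hnd
    intro w
    have hwmem : w ∈ Module.End.eigenspace ψ x ⊔ Module.End.eigenspace ψ 0 ⊔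
        Module.End.eigenspace ψ (-x) := hsum ▸ Submodule.mem_top
    obtain ⟨u', hu', c', hc', rfl⟩ := Submodule.mem_sup.mp hwmem
    obtain ⟨a', ha', b', hb', rfl⟩ := Submodule.mem_sup.mp hu'
    rw [Module.End.mem_eigenspace_iff] at ha' hb'
    rw [zero_smul] at hb'
    have h1 : ω a a' = 0 := horth x x a a' h2x ha ha'
    have h2 : ω a b' = 0 := horth x 0 a b' (by simpa using hx) ha (by rw [hb', zero_smul])
    have h3 : ω a c' = 0 := by
      rw [← hspanc] at hc'
      obtain ⟨t, rfl⟩ := Submodule.mem_span_singleton.mp hc'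
      rw [map_smul, smul_eq_mul, hac, mul_zero]
    simp [map_add, h1, h2, h3]
  -- stability
  set w := a + b + c with hw
  have hpsiv : ψ w = x • a + (-x) • c := by simp [hw, map_add, ha, hb, hc]
  have hpsi2 : ψ (ψ w) = x • ψ w ∨ ψ (ψ w) = (-x) • ψ w := by
    rcases hkey with h0 | h0
    · right
      rw [hpsiv, h0]
      simp [map_smul, hc, smul_smul]
    · left
      rw [hpsiv, h0]
      simp [map_smul, ha, smul_smul]
  rw [Submodule.map_span_le]
  intro m hm
  have hv1 : ψ w ∈ Submodule.span K {w, ψ w} :=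
    Submodule.subset_span (by simp)
  rcases hm with rfl | rfl
  · exact hv1
  · rcases hpsi2 with h | h <;> rw [h] <;> exact Submodule.smul_mem _ _ hv1
end
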